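/- arXiv:2508.17047 — 3 statements merged into one kernel-verified Lean document; each statement's English description precedes it below -/
import Mathlib

section
/- Let {A_s•, d_s•}_{s∈ℕ} be a projective system of complexes of K-vector spaces over a field K such that: (a) each transition map f_{s+1}^k: A_{s+1}^k → A_s^k is surjective, and (b) for each s,k there exists a section g_s^k: A_s^k → lim_s A_s^k of the canonical projection, compatible with the differentials (i.e. (lim_s d_s^k) ∘ g_s^k = g_s^{k+1} ∘ d_s^k). Then the canonical map of complexes colim_s (A_s•)* → (lim_s A_s•)* (from the colimit of the degreewise duals to the dual of the limit) induces an injective map on cohomology in every degree: H^k(colim_s (A_s•)*) ↪ H^k((lim_s A_s•)*). -/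
/-- For a projective system of complexes `{A_s•}` of `K`-vector spaces with surjective
transition maps and sections of the projections from the limit complex `L•` compatible
with the differentials, the canonical map `colim_s (A_s•)* → (lim_s A_s•)*` is injective
on cohomology: a dual cocycle `φ` at some level `s` whose image in the dual of the limit
is a coboundary is itself a coboundary (at the same level). -/
theorem stmt8 {K : Type*} [Field K]
    (A : ℕ → ℤ → Type*) [∀ s k, AddCommGroup (A s k)] [∀ s k, Module K (A s k)]
    (d : ∀ s k, A s k →ₗ[K] A s (k + 1))
    (f : ∀ s k, A (s + 1) k →ₗ[K] A s k)
    (hcx : ∀ s k, (d s (k + 1)) ∘ₗ (d s k) = 0)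
    (hchain : ∀ s k, (f s (k + 1)) ∘ₗ (d (s + 1) k) = (d s k) ∘ₗ (f s k))
    (hsurj : ∀ s k, Function.Surjective (f s k))
    -- the limit complex
    (Lim : ℤ → Type*) [∀ k, AddCommGroup (Lim k)] [∀ k, Module K (Lim k)]
    (p : ∀ s k, Lim k →ₗ[K] A s k)
    (hp : ∀ s k, (f s k) ∘ₗ (p (s + 1) k) = p s k)
    (D : ∀ k, Lim k →ₗ[K] Lim (k + 1))
    (hD : ∀ s k, (p s (k + 1)) ∘ₗ (D k) = (d s k) ∘ₗ (p s k))
    -- sections compatible with the differentials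
    (g : ∀ s k, A s k →ₗ[K] Lim k)
    (hg : ∀ s k, (p s k) ∘ₗ (g s k) = LinearMap.id)
    (hgd : ∀ s k, (D k) ∘ₗ (g s k) = (g s (k + 1)) ∘ₗ (d s k)) :
    ∀ (k : ℤ) (s : ℕ) (φ : Module.Dual K (A s (k + 1))),
      φ ∘ₗ (d s k) = 0 →
      (∃ δ : Module.Dual K (Lim (k + 1 + 1)), φ ∘ₗ (p s (k + 1)) = δ ∘ₗ (D (k + 1))) →
      ∃ η : Module.Dual K (A s (k + 1 + 1)), φ = η ∘ₗ (d s (k + 1)) := by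
  intro k s φ _ ⟨δ, hδ⟩
  refine ⟨δ ∘ₗ g s (k + 1 + 1), ?_⟩
  calc φ = (φ ∘ₗ p s (k + 1)) ∘ₗ g s (k + 1) := by
          rw [LinearMap.comp_assoc, hg]; rfl
    _ = δ ∘ₗ (D (k + 1) ∘ₗ g s (k + 1)) := by rw [hδ, LinearMap.comp_assoc]
    _ = (δ ∘ₗ g s (k + 1 + 1)) ∘ₗ d s (k + 1) := by rw [hgd, LinearMap.comp_assoc]
end

section
/- Let 𝔤 = sl₂ over a field 𝕂 of characteristic zero with standard basis H, u⁺, u⁻, let 𝔟 be the Borel spanned by H and u⁺, and let k ∈ 𝕂 be such that k - n ∈ 𝕂^× for every integer n (k is not an integer). Fix N ≥ 0 and consider the map Ξ_N: 𝕂[u⁻] ⊗ V_{N+1} ⊗ 𝔲⁻ → 𝕂[u⁻] ⊗ V_N defined on basis elements by Ξ_N(P(u⁻) ⊗ e_{N+1,i} ⊗ u⁻) = u⁻P(u⁻) ⊗ e_{N,i} + (k-i)P(u⁻) ⊗ e_{N,i-1} (with e_{N,N+1} = e_{N,-1} = 0), where V_M is the 𝕂-vector space with basis e_{M,0},…,e_{M,M}.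 Then Ξ_N is surjective. -/
open Polynomial

/-- The system is triangular: starting from `P 0 = 0`, put
`P (j + 1) = (c j)⁻¹ * (Q j - x * P j)`. -/
theorem surjective_bidiagonal_of_units {R : Type*} [Ring R] (x : R) :
    ∀ {n : ℕ} (c : Fin n → Rˣ), Function.Surjective
      (fun (P : Fin (n + 1) → R) (j : Fin n) => x * P j.castSucc + c j * P j.succ)
  | 0, _, Q => ⟨0, funext fun j => j.elim0⟩
  | n + 1, c, Q => by
    obtain ⟨P, hP⟩ := surjective_bidiagonal_of_units x (c ∘ Fin.castSucc) (Q ∘ Fin.castSucc)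
    refine ⟨Fin.snoc P (↑(c (Fin.last n))⁻¹ * (Q (Fin.last n) - x * P (Fin.last n))), ?_⟩
    funext j
    induction j using Fin.lastCases with
    | last =>
      beta_reduce
      rw [Fin.succ_last, Fin.snoc_last, Fin.snoc_castSucc, Units.mul_inv_cancel_left]
      abel
    | cast j =>
      beta_reduce
      rw [Fin.succ_castSucc, Fin.snoc_castSucc, Fin.snoc_castSucc]
      exact congrFun hP j

/-- `P i` is the coefficient of `e_{N+1,i} ⊗ u⁻` and the image is read in the basis
`e_{N,j}`, so the factor `k - i` of the informal statement appears as `k - (j + 1)`. -/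
theorem stmt12_general {𝕂 : Type*} [Field 𝕂] (k : 𝕂)
    (hk : ∀ n : ℤ, k - n ≠ 0) (N : ℕ) :
    Function.Surjective (fun (P : Fin (N + 2) → Polynomial 𝕂) =>
      fun (j : Fin (N + 1)) =>
        X * P j.castSucc + C (k - (((j : ℕ) + 1 : ℕ) : 𝕂)) * P j.succ) := by
  have hc (j : Fin (N + 1)) : k - (((j : ℕ) + 1 : ℕ) : 𝕂) ≠ 0 := by
    exact_mod_cast hk ((j : ℕ) + 1)
  exact surjective_bidiagonal_of_units X fun j => Units.map C.toMonoidHom (Units.mk0 _ (hc j))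

/-- Surjectivity of the dual-Koszul differential `Ξ_N` for `sl₂` and a non-integral
weight `k`: under the PBW identification, `Ξ_N` sends `(P_i)_{0≤i≤N+1}` to the family
`(X·P_j + (k-j-1)·P_{j+1})_{0≤j≤N}`, and this map is surjective. -/
theorem stmt12 {𝕂 : Type*} [Field 𝕂] [CharZero 𝕂] (k : 𝕂)
    (hk : ∀ n : ℤ, k - n ≠ 0) (N : ℕ) :
    Function.Surjective (fun (P : Fin (N + 2) → Polynomial 𝕂) =>
      fun (j : Fin (N + 1)) =>
        X * P j.castSucc + C (k - (((j : ℕ) + 1 : ℕ) : 𝕂)) * P j.succ) :=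
  stmt12_general k hk N
end

section
/- In the setting of the map Ξ_N: 𝕂[u⁻] ⊗ V_{N+1} ⊗ 𝔲⁻ → 𝕂[u⁻] ⊗ V_N given by Ξ_N(P ⊗ e_{N+1,i} ⊗ u⁻) = u⁻P ⊗ e_{N,i} + (k-i)P ⊗ e_{N,i-1} over a field 𝕂 of characteristic zero with k - n invertible for all integers n, the kernel of Ξ_N is the free 𝕂[u⁻]-module of rank one generated by the element e := Σ_{i=0}^{N+1} ((-1)^i / ((k-1)(k-2)⋯(k-i))) (u⁻)^i ⊗ e_{N+1,i} ⊗ u⁻ (with the i = 0 coefficient equal to 1). That is, an element Σ_i P_i(u⁻) ⊗ e_{N+1,i} ⊗ u⁻ lies in Ker(Ξ_N) if and only if P_{i+1}(u⁻) = -(k-i-1)^{-1} u⁻ P_i(u⁻) for all 0 ≤ i ≤ N. -/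
open Polynomial

/-- The kernel of `Ξ_N` is the free `𝕂[u⁻]`-module of rank one generated by
`e = Σ_i ((-1)^i / ((k-1)⋯(k-i))) (u⁻)^i ⊗ e_{N+1,i} ⊗ u⁻`: a family `(P_i)` lies in
the kernel iff it satisfies the recurrence `P_{i+1} = -(k-i-1)⁻¹ · u⁻ · P_i`,
equivalently iff it is a `𝕂[u⁻]`-multiple of `e`. -/
theorem stmt13 {𝕂 : Type*} [Field 𝕂] [CharZero 𝕂] (k : 𝕂)
    (hk : ∀ n : ℤ, k - n ≠ 0) (N : ℕ) :
    ∀ P : Fin (N + 2) → Polynomial 𝕂,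
      ((∀ j : Fin (N + 1),
          X * P j.castSucc + C (k - (((j : ℕ) + 1 : ℕ) : 𝕂)) * P j.succ = 0) ↔
        (∀ i : Fin (N + 1),
          P i.succ = -(k - (((i : ℕ) + 1 : ℕ) : 𝕂))⁻¹ • (X * P i.castSucc))) ∧
      ((∀ j : Fin (N + 1),
          X * P j.castSucc + C (k - (((j : ℕ) + 1 : ℕ) : 𝕂)) * P j.succ = 0) ↔
        ∃ Q : Polynomial 𝕂, ∀ i : Fin (N + 2),
          P i = Q * C ((-1) ^ (i : ℕ) *
              (∏ j ∈ Finset.range (i : ℕ), (k - ((j + 1 : ℕ) : 𝕂)))⁻¹) *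
            X ^ (i : ℕ)) := by
  intro P
  have hne : ∀ j : ℕ, k - ((j + 1 : ℕ) : 𝕂) ≠ 0 := fun j => by
    have := hk (j + 1)
    push_cast at this ⊢
    exact this
  have key : ∀ (c : 𝕂), c ≠ 0 → ∀ p q : Polynomial 𝕂,
      (X * p + C c * q = 0 ↔ q = -c⁻¹ • (X * p)) := by
    intro c hc p q
    rw [← C_mul']
    constructor
    · intro h
      have h2 : C c * q = -(X * p) := by linear_combination h
      calc q = C c⁻¹ * (C c * q) := by
              rw [← mul_assoc, ← C_mul, inv_mul_cancel₀ hc, C_1, one_mul]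
        _ = C c⁻¹ * (-(X * p)) := by rw [h2]
        _ = C (-c⁻¹) * (X * p) := by rw [map_neg]; ring
    · intro h
      rw [h]
      have h1 : C c * C (-c⁻¹) = -1 := by
        rw [← C_mul, mul_neg, mul_inv_cancel₀ hc, map_neg, C_1]
      linear_combination (X * p) * h1
  have hs : ∀ i : ℕ,
      ((-1 : 𝕂) ^ i * (∏ j ∈ Finset.range i, (k - ((j + 1 : ℕ) : 𝕂)))⁻¹)
        + (k - ((i + 1 : ℕ) : 𝕂)) *
          ((-1 : 𝕂) ^ (i + 1) * (∏ j ∈ Finset.range (i + 1), (k - ((j + 1 : ℕ) : 𝕂)))⁻¹) = 0 := by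
    intro i
    rw [Finset.prod_range_succ, mul_inv]
    have h1 : (k - ((i + 1 : ℕ) : 𝕂)) * (k - ((i + 1 : ℕ) : 𝕂))⁻¹ = 1 :=
      mul_inv_cancel₀ (hne i)
    linear_combination ((-1 : 𝕂) ^ (i + 1) *
      (∏ j ∈ Finset.range i, (k - ((j + 1 : ℕ) : 𝕂)))⁻¹) * h1
  have hCs : ∀ i : ℕ,
      (C ((-1 : 𝕂) ^ i * (∏ j ∈ Finset.range i, (k - ((j + 1 : ℕ) : 𝕂)))⁻¹) : Polynomial 𝕂)
        + C (k - ((i + 1 : ℕ) : 𝕂)) *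
          C ((-1 : 𝕂) ^ (i + 1) * (∏ j ∈ Finset.range (i + 1), (k - ((j + 1 : ℕ) : 𝕂)))⁻¹) = 0 := by
    intro i
    rw [← C_mul, ← C_add, hs i, C_0]
  refine ⟨⟨fun h i => (key _ (hne i) _ _).mp (h i),
          fun h j => (key _ (hne j) _ _).mpr (h j)⟩, ?_⟩
  constructor
  · intro h
    refine ⟨P 0, ?_⟩
    intro i
    induction i using Fin.induction with
    | zero => simp
    | succ i ih =>
      have hc := hne (i : ℕ)
      apply mul_left_cancel₀ (show (C (k - (((i : ℕ) + 1 : ℕ) : 𝕂)) : Polynomial 𝕂) ≠ 0 by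
        exact Polynomial.C_ne_zero.mpr hc)
      have h1 : C (k - (((i : ℕ) + 1 : ℕ) : 𝕂)) * P i.succ = -(X * P i.castSucc) := by
        linear_combination h i
      rw [h1, ih]
      simp only [Fin.coe_castSucc, Fin.val_succ]
      linear_combination (-(P 0 * X ^ ((i : ℕ) + 1))) * hCs (i : ℕ)
  · rintro ⟨Q, hQ⟩ j
    rw [hQ j.castSucc, hQ j.succ]
    simp only [Fin.coe_castSucc, Fin.val_succ]
    linear_combination (Q * X ^ ((j : ℕ) + 1)) * hCs (j : ℕ)
end
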